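/- Let F be a real polynomial of degree less than N and r ≥ 0 an integer, and let β*_r F denote the remainder on dividing ∑_{k=0}^{N−1} β_{r,k}·F_k·X^{k+r} by A(X) = X^N + 2^{−b} X − 1, where F_k is the coefficient of X^k in F. Then every coefficient of β*_r F has absolute value at most 2^{−r(b−2)} · max_{0≤k<N} |F_k|. -/

import Mathlib

open Polynomial

/-- Generalized binomial coefficient `C(x, r) = x (x-1) ⋯ (x-r+1) / r!`. -/
noncomputable def gbc (x : ℝ) (r : ℕ) : ℝ :=
  (∏ j ∈ Finset.range r, (x - j)) / (r.factorial : ℝ)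

/-- `β_{r,k} = C(-k/N, r) (-2^(-b))^r`. -/
noncomputable def betaC (b N r k : ℕ) : ℝ :=
  gbc (-(k : ℝ) / N) r * (-(2:ℝ) ^ (-(b:ℤ))) ^ r

/-- The polynomial `A(X) = X^N + 2^(-b) X - 1` over `ℝ`. -/
noncomputable def Apoly (b N : ℕ) : Polynomial ℝ :=
  X ^ N + C ((2:ℝ) ^ (-(b:ℤ))) * X - 1

/-- `β*_r F`: the remainder of `∑_{k<N} β_{r,k} F_k X^(k+r)` modulo `A(X)`. -/
noncomputable def bstar (b N r : ℕ) (F : Polynomial ℝ) : Polynomial ℝ :=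
  (∑ k ∈ Finset.range N, C (betaC b N r k * F.coeff k) * X ^ (k + r)) %ₘ Apoly b N

/-!
The sum defining `β*_r F` has degree `< N + r` and, since `|C(x, r)| ≤ 1` for `-1 ≤ x ≤ 0`,
coefficients of size at most `2^(-rb) max |F_k|`. Reducing modulo the monic polynomial `A`,
whose coefficients are at most `1` in absolute value, lowers the degree one step at a time by
subtracting a multiple of `X^m A`, and each step at most doubles the coefficient bound. After
`r` steps the degree is `< N` and the bound is `2^r 2^(-rb) max |F_k| ≤ 2^(-r(b-2)) max |F_k|`.
-/

theorem abs_coeff_modByMonic_le {R : Type*} [CommRing R] [LinearOrder R] [IsStrictOrderedRing R]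
    {A : R[X]} (hA : A.Monic) {c : R} (hAc : ∀ j, |A.coeff j| ≤ c)
    (m : ℕ) {P : R[X]} {B : R} (hP : P.degree < ↑(A.natDegree + m))
    (hPB : ∀ j, |P.coeff j| ≤ B) (i : ℕ) : |(P %ₘ A).coeff i| ≤ (1 + c) ^ m * B := by
  induction m generalizing P B with
  | zero =>
    rw [(modByMonic_eq_self_iff hA).2 (by rwa [degree_eq_natDegree hA.ne_zero])]
    simpa using hPB i
  | succ m ih =>
    have hB : 0 ≤ B := (abs_nonneg _).trans (hPB 0)
    set a := P.coeff (A.natDegree + m)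
    set Q := P - C a * A * X ^ m with hQ
    have hQmod : Q %ₘ A = P %ₘ A := by
      have hdvd : A ∣ C a * A * X ^ m := ⟨C a * X ^ m, by ring⟩
      rw [hQ, sub_modByMonic, (modByMonic_eq_zero_iff_dvd hA).2 hdvd, sub_zero]
    have hQcoeff (j : ℕ) :
        Q.coeff j = P.coeff j - if m ≤ j then a * A.coeff (j - m) else 0 := by
      simp only [hQ, coeff_sub, coeff_mul_X_pow', coeff_C_mul]
    have hQdeg : Q.degree < ↑(A.natDegree + m) := by
      refine degree_lt_iff_coeff_zero _ _ |>.2 fun j hj => ?_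
      rw [hQcoeff j, if_pos (by omega)]
      rcases hj.eq_or_lt with rfl | hj
      · rw [Nat.add_sub_cancel, hA.coeff_natDegree, mul_one, sub_self]
      · rw [coeff_eq_zero_of_degree_lt (hP.trans_le (by exact_mod_cast hj)),
          coeff_eq_zero_of_natDegree_lt (by omega : A.natDegree < j - m), mul_zero, sub_zero]
    have hQB (j : ℕ) : |Q.coeff j| ≤ (1 + c) * B := by
      rw [hQcoeff j]
      split_ifs
      · calc |P.coeff j - a * A.coeff (j - m)| ≤ |P.coeff j| + |a| * |A.coeff (j - m)| := by
              rw [← abs_mul]; exact abs_sub _ _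
          _ ≤ B + B * c := add_le_add (hPB j) (mul_le_mul (hPB _) (hAc _) (abs_nonneg _) hB)
          _ = (1 + c) * B := by ring
      · have : 0 ≤ c := (abs_nonneg _).trans (hAc 0)
        rw [sub_zero]; nlinarith [hPB j]
    rw [← hQmod, pow_succ, mul_assoc]
    exact ih hQdeg hQB

theorem coeff_sum_C_mul_X_pow_add {R : Type*} [Semiring R] (a : ℕ → R) (N r j : ℕ) :
    (∑ k ∈ Finset.range N, C (a k) * X ^ (k + r)).coeff j =
      if r ≤ j ∧ j - r < N then a (j - r) else 0 := by
  rw [finsetSum_coeff]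
  simp only [coeff_C_mul_X_pow]
  split_ifs with h
  · rw [Finset.sum_eq_single (j - r) (fun k _ hk => if_neg (by omega))
      (fun hk => absurd (Finset.mem_range.2 h.2) hk), if_pos (by omega)]
  · exact Finset.sum_eq_zero fun k hk => if_neg (by have := Finset.mem_range.1 hk; omega)

theorem degree_sum_C_mul_X_pow_add_lt {R : Type*} [Semiring R] (a : ℕ → R) (N r : ℕ) :
    (∑ k ∈ Finset.range N, C (a k) * X ^ (k + r)).degree < ↑(N + r) :=
  degree_lt_iff_coeff_zero _ _ |>.2 fun j hj => by
    rw [coeff_sum_C_mul_X_pow_add, if_neg (by omega)]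

theorem abs_coeff_sum_C_mul_X_pow_add_le {R : Type*} [Ring R] [LinearOrder R] [IsOrderedRing R]
    {a : ℕ → R} {N : ℕ} {B : R} (hB : 0 ≤ B) (ha : ∀ k < N, |a k| ≤ B) (r j : ℕ) :
    |(∑ k ∈ Finset.range N, C (a k) * X ^ (k + r)).coeff j| ≤ B := by
  rw [coeff_sum_C_mul_X_pow_add]
  split_ifs with h
  · exact ha _ h.2
  · rwa [abs_zero]

theorem monic_Apoly (b : ℕ) {N : ℕ} (hN : 2 ≤ N) : (Apoly b N).Monic := by
  unfold Apoly; monicity!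
  rw [if_pos (by omega), if_neg (by omega)]; norm_num

theorem natDegree_Apoly (b : ℕ) {N : ℕ} (hN : 2 ≤ N) : (Apoly b N).natDegree = N := by
  unfold Apoly; compute_degree!
  · rw [if_neg (by omega), if_neg (by omega)]; norm_num
  all_goals omega

theorem abs_coeff_Apoly_le_one (b : ℕ) {N : ℕ} (hN : 2 ≤ N) (j : ℕ) :
    |(Apoly b N).coeff j| ≤ 1 := by
  have hε : (2:ℝ) ^ (-(b:ℤ)) ≤ 1 := zpow_le_one_of_nonpos₀ one_le_two (by omega)
  have hε0 : (0:ℝ) < (2:ℝ) ^ (-(b:ℤ)) := by positivity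
  unfold Apoly
  simp only [coeff_sub, coeff_add, coeff_X_pow, coeff_C_mul, coeff_X, coeff_one]
  split_ifs <;> first | omega | (rw [abs_le]; constructor <;> linarith)

theorem abs_gbc_le_one {x : ℝ} (h0 : -1 ≤ x) (h1 : x ≤ 0) (r : ℕ) : |gbc x r| ≤ 1 := by
  have hr : (0:ℝ) < r.factorial := by exact_mod_cast r.factorial_pos
  rw [gbc, abs_div, abs_of_pos hr, div_le_one hr, Finset.abs_prod]
  calc ∏ j ∈ Finset.range r, |x - j| ≤ ∏ j ∈ Finset.range r, ((j:ℝ) + 1) := by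
        refine Finset.prod_le_prod (fun _ _ => abs_nonneg _) fun j _ => abs_le.2 ⟨?_, ?_⟩ <;>
          linarith [(Nat.cast_nonneg j : (0:ℝ) ≤ j)]
    _ = r.factorial := by
        rw [← Finset.prod_range_add_one_eq_factorial r]; push_cast; rfl

theorem abs_betaC_le (b r : ℕ) {N k : ℕ} (hk : k < N) :
    |betaC b N r k| ≤ ((2:ℝ) ^ (-(b:ℤ))) ^ r := by
  have hN : (0:ℝ) < N := by exact_mod_cast (k.zero_le.trans_lt hk)
  have hx0 : -1 ≤ -(k:ℝ) / N := by
    rw [neg_div, neg_le_neg_iff, div_le_one hN]; exact_mod_cast hk.le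
  have hx1 : -(k:ℝ) / N ≤ 0 := div_nonpos_of_nonpos_of_nonneg (by simp) hN.le
  rw [betaC, abs_mul, abs_pow, abs_neg, abs_of_pos (by positivity : (0:ℝ) < 2 ^ (-(b:ℤ)))]
  exact mul_le_of_le_one_left (by positivity) (abs_gbc_le_one hx0 hx1 r)

/-- every coefficient of `β*_r F` is bounded by
`2^(-r(b-2)) · max_{k<N} |F_k|`. -/
theorem bstar_r_norm_bound (b N : ℕ) (hN : 3 ≤ N)
    (F : Polynomial ℝ) (r : ℕ) :
    ∀ i : ℕ, |(bstar b N r F).coeff i| ≤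
      (2:ℝ) ^ (-((r : ℤ) * ((b : ℤ) - 2))) *
        (Finset.range N).sup' (Finset.nonempty_range_iff.mpr (by omega))
          (fun k => |F.coeff k|) := by
  intro i
  set M := (Finset.range N).sup' (Finset.nonempty_range_iff.mpr (by omega))
    (fun k => |F.coeff k|)
  have hFM {k : ℕ} (hk : k < N) : |F.coeff k| ≤ M :=
    Finset.le_sup' (fun k => |F.coeff k|) (Finset.mem_range.2 hk)
  have hM : 0 ≤ M := (abs_nonneg _).trans (hFM (by omega : 0 < N))
  have hterm : ∀ k < N, |betaC b N r k * F.coeff k| ≤ ((2:ℝ) ^ (-(b:ℤ))) ^ r * M := fun k hk => by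
    rw [abs_mul]; exact mul_le_mul (abs_betaC_le b r hk) (hFM hk) (abs_nonneg _) (by positivity)
  have hdeg : (∑ k ∈ Finset.range N, C (betaC b N r k * F.coeff k) * X ^ (k + r)).degree
      < ↑((Apoly b N).natDegree + r) := by
    rw [natDegree_Apoly b (by omega)]; exact degree_sum_C_mul_X_pow_add_lt _ N r
  calc |(bstar b N r F).coeff i| ≤ (1 + 1) ^ r * (((2:ℝ) ^ (-(b:ℤ))) ^ r * M) :=
        abs_coeff_modByMonic_le (monic_Apoly b (by omega)) (abs_coeff_Apoly_le_one b (by omega))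
          r hdeg (abs_coeff_sum_C_mul_X_pow_add_le (by positivity) hterm r) i
    _ = (2:ℝ) ^ ((r:ℤ) * (1 - b)) * M := by
        rw [← mul_assoc, ← mul_pow, one_add_one_eq_two, ← zpow_one_add₀ two_ne_zero,
          ← zpow_natCast, ← zpow_mul, mul_comm (1 + _)]
        ring_nf
    _ ≤ _ := by
        gcongr
        · norm_num
        · nlinarith [(r.cast_nonneg : (0:ℤ) ≤ r)]
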